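/- Fix γ > 0. For ℓ > 1 let T(ℓ) = tr(A(ℓ, η₁*(ℓ;γ); γ)), D(ℓ) = det(A(ℓ, η₁*(ℓ;γ); γ)), and R(ℓ) = 4·D(ℓ)/T(ℓ)². Then R is strictly decreasing on ℓ > 1, R(ℓ) → 1/(1+γ) as ℓ → ∞, and consequently the infimum of R over ℓ > 1 equals 1/(1+γ). -/

import Mathlib

open Real Matrix

/-- Cosine `c(ℓ;γ)` from spiked covariance asymptotics. -/
noncomputable def cP (γ ℓ : ℝ) : ℝ :=
  if 1 + Real.sqrt γ < ℓ then Real.sqrt ((1 - γ / (ℓ - 1) ^ 2) / (1 + γ / (ℓ - 1))) else 0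

/-- Sine `s(ℓ;γ) = sqrt(1 - c²)`. -/
noncomputable def sP (γ ℓ : ℝ) : ℝ := Real.sqrt (1 - (cP γ ℓ) ^ 2)

/-- The 2×2 block `A(ℓ,η;γ)` of the asymptotic pivot. -/
noncomputable def Amat (γ ℓ η : ℝ) : Matrix (Fin 2) (Fin 2) ℝ :=
  !![(η * (cP γ ℓ) ^ 2 + (sP γ ℓ) ^ 2) / ℓ, (η - 1) * cP γ ℓ * sP γ ℓ / Real.sqrt ℓ;
     (η - 1) * cP γ ℓ * sP γ ℓ / Real.sqrt ℓ, (cP γ ℓ) ^ 2 + η * (sP γ ℓ) ^ 2]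

/-- Largest eigenvalue `ν₊(A(ℓ,η;γ))` (supremum of the real spectrum). -/
noncomputable def nuP (γ ℓ η : ℝ) : ℝ := sSup (spectrum ℝ (Amat γ ℓ η))

/-- Smallest eigenvalue `ν₋(A(ℓ,η;γ))` (infimum of the real spectrum). -/
noncomputable def nuM (γ ℓ η : ℝ) : ℝ := sInf (spectrum ℝ (Amat γ ℓ η))

/-- Threshold `ℓ₁⁺(γ) = 1 + (γ + sqrt(γ² + 8γ))/2`. -/
noncomputable def ellOnePlus (γ : ℝ) : ℝ := 1 + (γ + Real.sqrt (γ ^ 2 + 8 * γ)) / 2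

/-- Optimal single-spike shrinker `η₁*(ℓ;γ)`. -/
noncomputable def eta1star (γ ℓ : ℝ) : ℝ :=
  if ellOnePlus γ < ℓ then ℓ / (1 + γ + 2 * γ / (ℓ - 1)) else 1

/-- Optimal single-spike loss `κ₁*(ℓ;γ)`. -/
noncomputable def kappa1star (γ ℓ : ℝ) : ℝ :=
  nuP γ ℓ (eta1star γ ℓ) / nuM γ ℓ (eta1star γ ℓ)

/-- `a(ℓ;γ) = c²/ℓ + s²`. -/
noncomputable def aP (γ ℓ : ℝ) : ℝ := (cP γ ℓ) ^ 2 / ℓ + (sP γ ℓ) ^ 2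

/-- `b(ℓ;γ) = s²/ℓ + c²`. -/
noncomputable def bP (γ ℓ : ℝ) : ℝ := (sP γ ℓ) ^ 2 / ℓ + (cP γ ℓ) ^ 2

/-- Multi-spike condition-number objective `K_r((ℓᵢ),(ηᵢ);γ)`. -/
noncomputable def Kr (γ : ℝ) {r : ℕ} (ℓ η : Fin r → ℝ) : ℝ :=
  max 1 (⨆ i, nuP γ (ℓ i) (η i)) / min 1 (⨅ i, nuM γ (ℓ i) (η i))

/-- `R(ℓ) = 4 D(ℓ)/T(ℓ)²` where `T,D` are trace and determinant of
`A(ℓ,η₁*(ℓ;γ);γ)`. -/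
noncomputable def Rfun (γ ℓ : ℝ) : ℝ :=
  4 * (Amat γ ℓ (eta1star γ ℓ)).det / (Amat γ ℓ (eta1star γ ℓ)).trace ^ 2

lemma cP_sq_of_gt {γ ℓ : ℝ} (hγ : 0 < γ) (hℓ : 1 + Real.sqrt γ < ℓ) :
    (cP γ ℓ)^2 = ((ℓ-1)^2 - γ) / ((ℓ-1)*(ℓ-1+γ)) := by
  have h0 : (0:ℝ) ≤ Real.sqrt γ := Real.sqrt_nonneg γ
  have hl : Real.sqrt γ < ℓ - 1 := by linarith
  have hl0 : 0 < ℓ - 1 := lt_of_le_of_lt h0 hl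
  have hgl : γ < (ℓ-1)^2 := by nlinarith [Real.sq_sqrt hγ.le]
  have hden : 0 < 1 + γ / (ℓ-1) := by positivity
  have hnum : 0 ≤ 1 - γ / (ℓ-1)^2 := by
    rw [sub_nonneg, div_le_one (by positivity)]; linarith
  rw [cP, if_pos hℓ, Real.sq_sqrt (div_nonneg hnum hden.le)]
  have h1 : ℓ - 1 + γ ≠ 0 := by positivity
  field_simp

lemma cP_sq_le_one {γ ℓ : ℝ} (hγ : 0 < γ) (hℓ : 1 < ℓ) : (cP γ ℓ)^2 ≤ 1 := by
  by_cases h : 1 + Real.sqrt γ < ℓ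
  · rw [cP_sq_of_gt hγ h]
    have h0 : (0:ℝ) ≤ Real.sqrt γ := Real.sqrt_nonneg γ
    have hl0 : 0 < ℓ - 1 := by linarith
    rw [div_le_one (by positivity)]; nlinarith
  · simp [cP, if_neg h]

lemma sP_sq {γ ℓ : ℝ} (hγ : 0 < γ) (hℓ : 1 < ℓ) : (sP γ ℓ)^2 = 1 - (cP γ ℓ)^2 :=
  Real.sq_sqrt (by linarith [cP_sq_le_one hγ hℓ])

lemma trace_Amat (γ ℓ η : ℝ) :
    (Amat γ ℓ η).trace = (η * (cP γ ℓ)^2 + (sP γ ℓ)^2)/ℓ + ((cP γ ℓ)^2 + η*(sP γ ℓ)^2) := by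
  simp [Amat, Matrix.trace_fin_two_of]

lemma det_Amat {γ ℓ : ℝ} (η : ℝ) (hγ : 0 < γ) (hℓ : 1 < ℓ) : (Amat γ ℓ η).det = η / ℓ := by
  have hℓ0 : (0:ℝ) < ℓ := by linarith
  have hs : (sP γ ℓ)^2 = 1 - (cP γ ℓ)^2 := sP_sq hγ hℓ
  rw [Amat, Matrix.det_fin_two_of]
  have key : ((η-1)*cP γ ℓ*sP γ ℓ/Real.sqrt ℓ) * ((η-1)*cP γ ℓ*sP γ ℓ/Real.sqrt ℓ)
      = ((η-1)*cP γ ℓ*sP γ ℓ)^2/ℓ := by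
    rw [div_mul_div_comm, Real.mul_self_sqrt hℓ0.le]; ring
  rw [key]
  field_simp
  linear_combination (η * ((cP γ ℓ)^2 + (sP γ ℓ)^2 + 1)) * hs

lemma ellOnePlus_gt {γ : ℝ} (hγ : 0 < γ) : 1 + Real.sqrt γ < ellOnePlus γ := by
  have h1 : Real.sqrt (4*γ) < Real.sqrt (γ^2+8*γ) :=
    Real.sqrt_lt_sqrt (by positivity) (by nlinarith)
  have h2 : Real.sqrt (4*γ) = 2*Real.sqrt γ := by
    rw [show (4:ℝ)*γ = 2^2*γ by ring, Real.sqrt_mul (by positivity), Real.sqrt_sq (by norm_num)]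
  rw [ellOnePlus]; nlinarith [Real.sqrt_nonneg γ]

lemma ellOnePlus_gt_one {γ : ℝ} (hγ : 0 < γ) : 1 < ellOnePlus γ := by
  have := ellOnePlus_gt hγ
  have := Real.sqrt_nonneg γ
  linarith

lemma lam0_key {γ : ℝ} (hγ : 0 < γ) :
    (ellOnePlus γ - 1)^2 = γ*(ellOnePlus γ - 1) + 2*γ := by
  have hs : Real.sqrt (γ^2+8*γ) ^ 2 = γ^2+8*γ := Real.sq_sqrt (by positivity)
  simp only [ellOnePlus]
  linear_combination (1/4 : ℝ) * hs

/-- piecewise closed form of `Rfun`. -/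
noncomputable def gfun (γ ℓ : ℝ) : ℝ :=
  if ellOnePlus γ < ℓ then (ℓ-1+γ)^2 / ((ℓ-1)*((1+γ)*(ℓ-1)+2*γ)) else 4*ℓ/(ℓ+1)^2

set_option maxHeartbeats 1600000 in
lemma Rfun_eq {γ ℓ : ℝ} (hγ : 0 < γ) (hℓ : 1 < ℓ) : Rfun γ ℓ = gfun γ ℓ := by
  have hℓ0 : (0:ℝ) < ℓ := by linarith
  have hl0 : 0 < ℓ - 1 := by linarith
  have hs : (sP γ ℓ)^2 = 1 - (cP γ ℓ)^2 := sP_sq hγ hℓ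
  by_cases h : ellOnePlus γ < ℓ
  · have hgt : 1 + Real.sqrt γ < ℓ := lt_trans (ellOnePlus_gt hγ) h
    have h1 : ℓ - 1 + γ ≠ 0 := by positivity
    have h2 : (0:ℝ) < 1 + γ + 2*γ/(ℓ-1) := by positivity
    have h3 : (0:ℝ) < (1+γ)*(ℓ-1)+2*γ := by positivity
    have hη : eta1star γ ℓ = ℓ*(ℓ-1)/((1+γ)*(ℓ-1)+2*γ) := by
      rw [eta1star, if_pos h]
      field_simp
    have hc2 : (cP γ ℓ)^2 = ((ℓ-1)^2-γ)/((ℓ-1)*(ℓ-1+γ)) := cP_sq_of_gt hγ hgt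
    have hT : (Amat γ ℓ (eta1star γ ℓ)).trace = 2*(ℓ-1)/(ℓ-1+γ) := by
      rw [trace_Amat, hη, hs, hc2]
      field_simp
      ring
    have hD : (Amat γ ℓ (eta1star γ ℓ)).det = ℓ*(ℓ-1)/((1+γ)*(ℓ-1)+2*γ) / ℓ := by
      rw [det_Amat _ hγ hℓ, hη]
    rw [Rfun, hT, hD, gfun, if_pos h]
    field_simp
    ring
  · have he : eta1star γ ℓ = 1 := if_neg h
    rw [Rfun, gfun, if_neg h, det_Amat _ hγ hℓ, trace_Amat, he, hs]
    field_simp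
    ring

lemma f1_le {x z : ℝ} (hx : 1 ≤ x) (hxz : x ≤ z) : 4*z/(z+1)^2 ≤ 4*x/(x+1)^2 := by
  have hx0 : (0:ℝ) < (x+1)^2 := by positivity
  have hz0 : (0:ℝ) < (z+1)^2 := by nlinarith
  rw [div_le_div_iff₀ hz0 hx0]
  have key : 0 ≤ (z-x)*(x*z-1) := mul_nonneg (by linarith) (by nlinarith)
  nlinarith [key]

lemma f1_lt {x z : ℝ} (hx : 1 ≤ x) (hxz : x < z) : 4*z/(z+1)^2 < 4*x/(x+1)^2 := by
  have hx0 : (0:ℝ) < (x+1)^2 := by positivity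
  have hz0 : (0:ℝ) < (z+1)^2 := by nlinarith
  rw [div_lt_div_iff₀ hz0 hx0]
  have key : 0 < (z-x)*(x*z-1) := mul_pos (by linarith) (by nlinarith)
  nlinarith [key]

lemma f2_lt {γ x y : ℝ} (hγ : 0 < γ) (hx : 1 < x) (hxy : x < y) :
    (y-1+γ)^2/((y-1)*((1+γ)*(y-1)+2*γ)) < (x-1+γ)^2/((x-1)*((1+γ)*(x-1)+2*γ)) := by
  have ha : 0 < x - 1 := by linarith
  have hb : 0 < y - 1 := by linarith
  rw [div_lt_div_iff₀ (by positivity) (by positivity)]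
  have key : 0 < γ^2*((y-1)-(x-1))*(2*(x-1)*(y-1)+(1+γ)*((x-1)+(y-1))+2*γ) := by
    have : (0:ℝ) < (y-1)-(x-1) := by linarith
    positivity
  nlinarith [key]

lemma boundary_eq {γ : ℝ} (hγ : 0 < γ) :
    (ellOnePlus γ - 1 + γ)^2 / ((ellOnePlus γ - 1)*((1+γ)*(ellOnePlus γ - 1)+2*γ))
      = 4*(ellOnePlus γ)/((ellOnePlus γ)+1)^2 := by
  have h1 : 1 < ellOnePlus γ := ellOnePlus_gt_one hγ
  have h2 : 0 < ellOnePlus γ - 1 := by linarith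
  have key := lam0_key hγ
  rw [div_eq_div_iff (by positivity) (by positivity)]
  linear_combination ((ellOnePlus γ - 1)^2 - (γ*(ellOnePlus γ - 1) + 2*γ)) * key

lemma gfun_anti {γ : ℝ} (hγ : 0 < γ) : StrictAntiOn (gfun γ) (Set.Ioi 1) := by
  intro x hx y hy hxy
  simp only [Set.mem_Ioi] at hx hy
  by_cases h1 : ellOnePlus γ < x
  · have h2 : ellOnePlus γ < y := lt_trans h1 hxy
    have ex : gfun γ x = (x-1+γ)^2/((x-1)*((1+γ)*(x-1)+2*γ)) := if_pos h1
    have ey : gfun γ y = (y-1+γ)^2/((y-1)*((1+γ)*(y-1)+2*γ)) := if_pos h2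
    rw [ex, ey]
    exact f2_lt hγ hx hxy
  · push_neg at h1
    have ex : gfun γ x = 4*x/(x+1)^2 := if_neg (not_lt.2 h1)
    by_cases h2 : ellOnePlus γ < y
    · have ey : gfun γ y = (y-1+γ)^2/((y-1)*((1+γ)*(y-1)+2*γ)) := if_pos h2
      rw [ex, ey]
      calc (y-1+γ)^2/((y-1)*((1+γ)*(y-1)+2*γ))
          < (ellOnePlus γ - 1+γ)^2/((ellOnePlus γ -1)*((1+γ)*(ellOnePlus γ -1)+2*γ)) :=
            f2_lt hγ (ellOnePlus_gt_one hγ) h2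
        _ = 4*(ellOnePlus γ)/((ellOnePlus γ)+1)^2 := boundary_eq hγ
        _ ≤ 4*x/(x+1)^2 := f1_le hx.le h1
    · have ey : gfun γ y = 4*y/(y+1)^2 := if_neg (not_lt.2 (not_lt.1 h2))
      rw [ex, ey]
      exact f1_lt hx.le hxy

lemma Rfun_tendsto {γ : ℝ} (hγ : 0 < γ) :
    Filter.Tendsto (Rfun γ) Filter.atTop (nhds (1 / (1 + γ))) := by
  have hb : Filter.Tendsto (fun ℓ:ℝ => γ/(ℓ-1)) Filter.atTop (nhds 0) := by
    apply Filter.Tendsto.div_atTop tendsto_const_nhds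
    exact Filter.tendsto_atTop_add_const_right _ _ Filter.tendsto_id
  have h1 : Filter.Tendsto (fun ℓ:ℝ => 1+γ/(ℓ-1)) Filter.atTop (nhds (1+0)) :=
    Filter.Tendsto.add (tendsto_const_nhds (x := (1:ℝ))) hb
  have hnum : Filter.Tendsto (fun ℓ:ℝ => (1+γ/(ℓ-1))^2) Filter.atTop (nhds 1) := by
    simpa using h1.pow 2
  have h2 : Filter.Tendsto (fun ℓ:ℝ => (1+γ)+2*(γ/(ℓ-1))) Filter.atTop (nhds ((1+γ)+2*0)) :=
    Filter.Tendsto.add (tendsto_const_nhds (x := 1+γ)) (hb.const_mul 2)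
  have hden : Filter.Tendsto (fun ℓ:ℝ => (1+γ)+2*(γ/(ℓ-1))) Filter.atTop (nhds (1+γ)) := by
    simpa using h2
  have hne : (1:ℝ)+γ ≠ 0 := by positivity
  have hmain := hnum.div hden hne
  apply hmain.congr'
  filter_upwards [Filter.eventually_gt_atTop (ellOnePlus γ)] with ℓ hℓ
  have h1 : 1 < ℓ := lt_trans (ellOnePlus_gt_one hγ) hℓ
  have h2 : 0 < ℓ - 1 := by linarith
  rw [Rfun_eq hγ h1, gfun, if_pos hℓ, Pi.div_apply]
  have h3 : (0:ℝ) < (1+γ)*(ℓ-1)+2*γ := by positivity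
  field_simp

/-- `R` is strictly decreasing on `ℓ > 1`, tends to `1/(1+γ)` at
infinity, and its infimum over `ℓ > 1` is `1/(1+γ)`. -/
theorem stmt8 (γ : ℝ) (hγ : 0 < γ) :
    StrictAntiOn (Rfun γ) (Set.Ioi 1) ∧
    Filter.Tendsto (Rfun γ) Filter.atTop (nhds (1 / (1 + γ))) ∧
    IsGLB (Rfun γ '' Set.Ioi 1) (1 / (1 + γ)) := by
  have anti : StrictAntiOn (Rfun γ) (Set.Ioi 1) := by
    intro x hx y hy hxy
    rw [Rfun_eq hγ hx, Rfun_eq hγ hy]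
    exact gfun_anti hγ hx hy hxy
  refine ⟨anti, Rfun_tendsto hγ, ?_, ?_⟩
  · rintro v ⟨x, hx, rfl⟩
    apply le_of_tendsto (Rfun_tendsto hγ)
    filter_upwards [Filter.eventually_gt_atTop x] with y hy
    exact (anti hx (lt_trans hx hy) hy).le
  · intro b hb
    apply ge_of_tendsto (Rfun_tendsto hγ)
    filter_upwards [Filter.eventually_gt_atTop 1] with y hy
    exact hb ⟨y, hy, rfl⟩
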